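/- Let M ⊆ ℝ^D be a compact C² submanifold with (possibly empty) boundary whose reach satisfies τ_M ≥ τ_min > 0. For any two points p, q ∈ M with ‖p - q‖ ≤ τ_min, the geodesic distance in M satisfies ‖p - q‖ ≤ d_M(p,q) ≤ 2‖p - q‖. -/

import Mathlib

open Set Metric ENNReal NNReal

noncomputable section

abbrev Euc (D : ℕ) := EuclideanSpace ℝ (Fin D)

/-- The medial axis of a set `S`: ambient points having at least two nearest points on `S`. -/
def medialAxis {D : ℕ} (S : Set (Euc D)) : Set (Euc D) :=
  {z | ∃ x ∈ S, ∃ y ∈ S, x ≠ y ∧ dist z x = Metric.infDist z S ∧ dist z y = Metric.infDist z S}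

/-- The reach of a set: the infimal distance from its medial axis to the set. -/
def reach {D : ℕ} (S : Set (Euc D)) : ℝ≥0∞ :=
  ⨅ z ∈ medialAxis S, EMetric.infEdist z S

/-- Geodesic (intrinsic) distance in `S`: infimum of lengths of continuous paths in `S`
joining `x` to `y` (`∞` if there is none). -/
def geodesicDist {D : ℕ} (S : Set (Euc D)) (x y : Euc D) : ℝ≥0∞ :=
  ⨅ (γ : ℝ → Euc D) (_ : ContinuousOn γ (Set.Icc 0 1))
    (_ : Set.MapsTo γ (Set.Icc 0 1) S) (_ : γ 0 = x) (_ : γ 1 = y),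
    eVariationOn γ (Set.Icc 0 1)

/-- The model space `ℝ^d × {0}^{D-d}` inside `ℝ^D`. -/
def fullModel (D d : ℕ) : Set (Euc D) := {x | ∀ i : Fin D, d ≤ (i : ℕ) → x i = 0}

/-- The model half-space `ℝ^{d-1} × ℝ₊ × {0}^{D-d}` inside `ℝ^D`. -/
def halfModel (D d : ℕ) : Set (Euc D) :=
  {x | (∀ i : Fin D, d ≤ (i : ℕ) → x i = 0) ∧ ∃ i : Fin D, (i : ℕ) + 1 = d ∧ 0 ≤ x i}

/-- `p` is a point of `M` around which `M` is C²-parametrized by the given model set. -/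
def IsChartedPoint {D : ℕ} (model : Set (Euc D)) (M : Set (Euc D)) (p : Euc D) : Prop :=
  ∃ (U V : Set (Euc D)) (Ψ Φ : Euc D → Euc D),
    IsOpen U ∧ IsOpen V ∧ (0 : Euc D) ∈ U ∧ p ∈ V ∧
    ContDiffOn ℝ 2 Ψ U ∧ ContDiffOn ℝ 2 Φ V ∧ Set.BijOn Ψ U V ∧
    (∀ x ∈ U, Φ (Ψ x) = x) ∧ Ψ 0 = p ∧ Ψ '' (U ∩ model) = M ∩ V

/-- `M ⊆ ℝ^D` is a `d`-dimensional C² submanifold with (possibly empty) boundary. -/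
def IsC2SubmanifoldWithBoundary {D : ℕ} (d : ℕ) (M : Set (Euc D)) : Prop :=
  IsClosed M ∧ ∀ p ∈ M, IsChartedPoint (fullModel D d) M p ∨ IsChartedPoint (halfModel D d) M p

/-- The (differential) boundary `∂M` of `M`: points carrying a half-space chart. -/
def boundaryOf {D : ℕ} (d : ℕ) (M : Set (Euc D)) : Set (Euc D) :=
  {p ∈ M | IsChartedPoint (halfModel D d) M p}

/-- The tangent space of `M` at `x`: the linear span of the tangent cone. -/
def tangentSpaceAt {D : ℕ} (M : Set (Euc D)) (x : Euc D) : Submodule ℝ (Euc D) :=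
  Submodule.span ℝ (tangentConeAt ℝ M x)

/-- The normal cone of `M` at `x`: the dual cone of the tangent cone. -/
def normalConeAt {D : ℕ} (M : Set (Euc D)) (x : Euc D) : Set (Euc D) :=
  {v | ∀ u ∈ tangentConeAt ℝ M x, (inner ℝ u v : ℝ) ≤ 0}

/-- Orthogonal projection onto a subspace, as a continuous linear map `E →L[ℝ] E`. -/
def projSub {D : ℕ} (T : Submodule ℝ (Euc D)) : Euc D →L[ℝ] Euc D :=
  T.subtypeL.comp (Submodule.orthogonalProjectionOnto T)

/-- Angle between two linear subspaces: operator norm of the difference of projections. -/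
def angleS {D : ℕ} (T T' : Submodule ℝ (Euc D)) : ℝ := ‖projSub T - projSub T'‖

/-- `η` is the unit outward-pointing normal of `M` at `p`:
the unit vector of `Nor(p,M) ∩ T_p M`. -/
def IsOutwardNormalAt {D : ℕ} (M : Set (Euc D)) (p η : Euc D) : Prop :=
  η ∈ normalConeAt M p ∧ η ∈ tangentSpaceAt M p ∧ ‖η‖ = 1

/-!
Federer's argument. Below the reach `τ` every point `z` has a unique nearest point `π z` in `M`,
which depends continuously on `z`, so `infDist · M ^ 2` is differentiable with gradient
`2 (z - π z)`. Maximising it over a small ball centred on the normal ray `a + t • n` and applying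
Fermat's rule shows that the ray keeps `a` as nearest point up to distance `τ`. Comparing
`a + t • n` with any `b ∈ M` and letting `t → τ` gives
`2 τ ⟪x - π x, b - π x⟫ ≤ infDist x M * ‖b - π x‖ ^ 2`, which makes `π` Lipschitz with constant
`τ / (τ - r)` on the `r`-neighbourhood of `M`. The segment `[p, q]` stays within `‖p - q‖ / 2` of
`M`, so its image under `π` is a path in `M` of length at most `2 ‖p - q‖`.
-/

open Filter Topology RealInnerProductSpace

section NearestPoint

variable {α : Type*} [MetricSpace α] {M : Set α} {z w y : α}

def nearestPoints (M : Set α) (z : α) : Set α := {y ∈ M | dist z y = infDist z M}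

-- The fallback value `z` is junk: nearest points exist whenever `M` is compact and nonempty.
open Classical in
def nearestPt (M : Set α) (z : α) : α :=
  if h : (nearestPoints M z).Nonempty then h.some else z

lemma nearestPt_mem_nearestPoints (h : (nearestPoints M z).Nonempty) :
    nearestPt M z ∈ nearestPoints M z := by
  rw [nearestPt, dif_pos h]
  exact h.some_mem

def UniqueNearestPointsWithin (M : Set α) (τ : ℝ) : Prop :=
  ∀ z, infDist z M < τ → (nearestPoints M z).Subsingleton

lemma eq_nearestPt (hu : (nearestPoints M z).Subsingleton) (hy : y ∈ nearestPoints M z) :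
    y = nearestPt M z :=
  hu hy (nearestPt_mem_nearestPoints ⟨y, hy⟩)

lemma nearestPoints_eq_singleton (hz : z ∈ M) : nearestPoints M z = {z} := by
  ext y
  simp only [nearestPoints, infDist_zero_of_mem hz, dist_eq_zero, mem_ofPred_eq,
    mem_singleton_iff]
  exact ⟨fun h => h.2.symm, fun h => ⟨h ▸ hz, h.symm⟩⟩

lemma nearestPt_eq_self (hz : z ∈ M) : nearestPt M z = z :=
  (eq_nearestPt (nearestPoints_eq_singleton hz ▸ subsingleton_singleton)
    (nearestPoints_eq_singleton hz ▸ rfl)).symm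

namespace IsCompact

lemma nearestPoints_nonempty (hM : IsCompact M) (hne : M.Nonempty) (z : α) :
    (nearestPoints M z).Nonempty :=
  let ⟨y, hy, hzy⟩ := hM.exists_infDist_eq_dist hne z
  ⟨y, hy, hzy.symm⟩

lemma nearestPt_mem (hM : IsCompact M) (hne : M.Nonempty) (z : α) : nearestPt M z ∈ M :=
  (nearestPt_mem_nearestPoints (hM.nearestPoints_nonempty hne z)).1

lemma dist_nearestPt (hM : IsCompact M) (hne : M.Nonempty) (z : α) :
    dist z (nearestPt M z) = infDist z M :=
  (nearestPt_mem_nearestPoints (hM.nearestPoints_nonempty hne z)).2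

lemma continuousAt_nearestPt (hM : IsCompact M) (hne : M.Nonempty)
    (hu : (nearestPoints M w).Subsingleton) :
    ContinuousAt (nearestPt M) w := by
  refine hM.tendsto_nhds_of_unique_mapClusterPt (.of_forall (hM.nearestPt_mem hne))
    fun b hbM hb => eq_nearestPt hu ⟨hbM, ?_⟩
  refine le_antisymm (le_of_forall_pos_le_add fun ε hε => ?_) (infDist_le_dist_of_mem hbM)
  have hε3 : 0 < ε / 3 := by positivity
  obtain ⟨y, hyb, hyw⟩ :=
    ((hb.frequently (ball_mem_nhds b hε3)).and_eventually (ball_mem_nhds w hε3)).exists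
  calc dist w b ≤ dist w y + dist y (nearestPt M y) + dist (nearestPt M y) b :=
        dist_triangle4 _ _ _ _
    _ ≤ dist w y + (infDist w M + dist y w) + dist (nearestPt M y) b := by
        rw [hM.dist_nearestPt hne]; gcongr; exact infDist_le_infDist_add_dist
    _ ≤ infDist w M + ε := by linarith [dist_comm w y]

end IsCompact

end NearestPoint

section InnerProduct

variable {E : Type*} [NormedAddCommGroup E] [InnerProductSpace ℝ E] {M : Set E}

lemma abs_infDist_sq_sub_sub_inner_le (hM : IsCompact M) (hne : M.Nonempty) (x h : E) :
    |infDist (x + h) M ^ 2 - infDist x M ^ 2 - 2 * ⟪x - nearestPt M x, h⟫| ≤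
      (‖h‖ + 2 * ‖nearestPt M x - nearestPt M (x + h)‖) * ‖h‖ := by
  set a := nearestPt M x
  set b := nearestPt M (x + h)
  have hxa : ‖x - a‖ = infDist x M := by rw [← dist_eq_norm, hM.dist_nearestPt hne]
  have hxb : ‖x + h - b‖ = infDist (x + h) M := by rw [← dist_eq_norm, hM.dist_nearestPt hne]
  have hle_a : infDist (x + h) M ^ 2 ≤ ‖x + h - a‖ ^ 2 := by
    rw [← dist_eq_norm]
    exact pow_le_pow_left₀ infDist_nonneg (infDist_le_dist_of_mem (hM.nearestPt_mem hne x)) 2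
  have hle_b : infDist x M ^ 2 ≤ ‖x - b‖ ^ 2 := by
    rw [← dist_eq_norm]
    exact pow_le_pow_left₀ infDist_nonneg (infDist_le_dist_of_mem (hM.nearestPt_mem hne _)) 2
  have ea : ‖x + h - a‖ ^ 2 = ‖x - a‖ ^ 2 + 2 * ⟪x - a, h⟫ + ‖h‖ ^ 2 := by
    rw [show x + h - a = (x - a) + h by abel, norm_add_sq_real]
  have eb : ‖x - b‖ ^ 2 = ‖x + h - b‖ ^ 2 - 2 * ⟪x + h - b, h⟫ + ‖h‖ ^ 2 := by
    rw [show x - b = (x + h - b) - h by abel, norm_sub_sq_real]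
  have eab : ⟪x + h - b, h⟫ = ⟪x - a, h⟫ + ⟪a - b, h⟫ + ‖h‖ ^ 2 := by
    rw [show x + h - b = (x - a) + (a - b) + h by abel, inner_add_left, inner_add_left,
      real_inner_self_eq_norm_sq]
  have hcs := abs_le.1 (abs_real_inner_le_norm (a - b) h)
  rw [hxa] at ea
  rw [hxb] at eb
  rw [abs_le]
  constructor <;> nlinarith [norm_nonneg h, norm_nonneg (a - b)]

lemma hasFDerivAt_infDist_sq (hM : IsCompact M) (hne : M.Nonempty) {x : E}
    (hu : (nearestPoints M x).Subsingleton) :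
    HasFDerivAt (fun y => infDist y M ^ 2) (innerSL ℝ ((2 : ℝ) • (x - nearestPt M x))) x := by
  rw [hasFDerivAt_iff_isLittleO_nhds_zero, Asymptotics.isLittleO_iff]
  intro c hc
  have hπ : Tendsto (fun h : E => nearestPt M (x + h)) (𝓝 0) (𝓝 (nearestPt M x)) :=
    (hM.continuousAt_nearestPt hne hu).tendsto.comp
      (by simpa using (continuous_const_add x).tendsto (0 : E))
  have hg : Tendsto (fun h : E => ‖h‖ + 2 * ‖nearestPt M x - nearestPt M (x + h)‖) (𝓝 0)
      (𝓝 0) := by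
    simpa using tendsto_norm_zero.add
      (((tendsto_const_nhds (x := nearestPt M x)).sub hπ).norm.const_mul 2)
  filter_upwards [hg.eventually (ge_mem_nhds hc)] with h hh
  rw [innerSL_apply_apply, real_inner_smul_left, Real.norm_eq_abs]
  exact (abs_infDist_sq_sub_sub_inner_le hM hne x h).trans
    (mul_le_mul_of_nonneg_right hh (norm_nonneg h))

lemma exists_nonneg_smul_of_inner_neg_imp {a u : E} (hu : u ≠ 0)
    (h : ∀ v, ⟪u, v⟫ < 0 → ⟪a, v⟫ ≤ 0) : ∃ c : ℝ, 0 ≤ c ∧ a = c • u := by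
  have hu2 : 0 < ‖u‖ ^ 2 := by positivity
  have hau : 0 ≤ ⟪a, u⟫ := by
    have := h (-u) (by rw [inner_neg_right, real_inner_self_eq_norm_sq]; linarith)
    rw [inner_neg_right] at this
    linarith
  have h' : ∀ v, ⟪u, v⟫ ≤ 0 → ⟪a, v⟫ ≤ 0 := by
    intro v hv
    have hlim : Tendsto (fun ε : ℝ => ε * ⟪a, u⟫) (𝓝[>] 0) (𝓝 0) :=
      ((continuous_mul_const ⟪a, u⟫).tendsto' 0 0 (zero_mul _)).mono_left nhdsWithin_le_nhds
    refine ge_of_tendsto hlim (eventually_nhdsWithin_of_forall fun ε (hε : 0 < ε) => ?_)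
    have := h (v - ε • u) (by
      rw [inner_sub_right, real_inner_smul_right, real_inner_self_eq_norm_sq]; nlinarith)
    rw [inner_sub_right, real_inner_smul_right] at this
    linarith
  set v₀ := ‖u‖ ^ 2 • a - ⟪a, u⟫ • u
  have huv₀ : ⟪u, v₀⟫ = 0 := by
    rw [inner_sub_right, real_inner_smul_right, real_inner_smul_right,
      real_inner_self_eq_norm_sq, real_inner_comm]
    ring
  have hav₀ : ⟪a, v₀⟫ = 0 := by
    refine le_antisymm (h' _ huv₀.le) ?_
    have := h' (-v₀) (by rw [inner_neg_right, huv₀, neg_zero])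
    rwa [inner_neg_right, neg_nonpos] at this
  have hv₀ : v₀ = 0 := by
    rw [← inner_self_eq_zero (𝕜 := ℝ)]
    calc ⟪v₀, v₀⟫ = ⟪‖u‖ ^ 2 • a - ⟪a, u⟫ • u, v₀⟫ := rfl
      _ = 0 := by
        rw [inner_sub_left, real_inner_smul_left, real_inner_smul_left, hav₀, huv₀]
        ring
  refine ⟨⟪a, u⟫ / ‖u‖ ^ 2, div_nonneg hau hu2.le, ?_⟩
  rw [div_eq_inv_mul, mul_smul, ← sub_eq_zero.1 hv₀, inv_smul_smul₀ hu2.ne']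

lemma exists_nonneg_smul_of_isMaxOn_closedBall {f : E → ℝ} {A w z : E} {R : ℝ}
    (hf : HasFDerivAt f (innerSL ℝ A) w) (hmax : IsMaxOn f (closedBall z R) w)
    (hw : dist w z = R) (hR : 0 < R) : ∃ c : ℝ, 0 ≤ c ∧ A = c • (w - z) := by
  refine exists_nonneg_smul_of_inner_neg_imp (by rw [sub_ne_zero]; rintro rfl; simp_all)
    fun v hv => ?_
  have hv0 : v ≠ 0 := by rintro rfl; simp at hv
  set t := -2 * ⟪w - z, v⟫ / ‖v‖ ^ 2
  have ht : 0 < t := div_pos (by linarith) (by positivity)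
  -- `w + t • v` is the reflection of `w` in the hyperplane through `z` orthogonal to `v`
  have hwt : w + t • v ∈ closedBall z R := by
    have htv : t * ‖v‖ ^ 2 = -2 * ⟪w - z, v⟫ := div_mul_cancel₀ _ (by positivity)
    rw [mem_closedBall, ← hw, dist_eq_norm, dist_eq_norm,
      show w + t • v - z = (w - z) + t • v by abel]
    refine le_of_eq (sq_eq_sq₀ (norm_nonneg _) (norm_nonneg _) |>.1 ?_)
    rw [norm_add_sq_real, real_inner_smul_right, norm_smul, Real.norm_of_nonneg ht.le]
    linear_combination t * htv
  have hseg : segment ℝ w (w + t • v) ⊆ closedBall z R :=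
    (convex_closedBall z R).segment_subset (mem_closedBall.2 hw.le) hwt
  have := hmax.localize.hasFDerivWithinAt_nonpos hf.hasFDerivWithinAt
    (mem_posTangentConeAt_of_segment_subset hseg)
  rw [innerSL_apply_apply, real_inner_smul_right] at this
  exact nonpos_of_mul_nonpos_right this ht
  
end InnerProduct

section Reach

variable {E : Type*} [NormedAddCommGroup E] [InnerProductSpace ℝ E] {M : Set E}

lemma sub_nearestPt_eq_smul_of_isMaxOn_closedBall (hM : IsCompact M) (hne : M.Nonempty)
    {z w : E} {R : ℝ} (hR : 0 < R) (hu : (nearestPoints M w).Subsingleton)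
    (hpos : 0 < infDist w M) (hw : w ∈ closedBall z R)
    (hmax : IsMaxOn (fun y => infDist y M ^ 2) (closedBall z R) w) :
    dist w z = R ∧ w - nearestPt M w = (infDist w M / R) • (w - z) := by
  have hf := hasFDerivAt_infDist_sq hM hne hu
  have hwb : ‖w - nearestPt M w‖ = infDist w M := by
    rw [← dist_eq_norm, hM.dist_nearestPt hne]
  have hwz : dist w z = R := by
    refine (mem_closedBall.1 hw).eq_of_not_lt fun hlt => hpos.ne' ?_
    have h0 := congrArg (fun L => L (w - nearestPt M w))
      ((hmax.isLocalMax (closedBall_mem_nhds_of_mem hlt)).hasFDerivAt_eq_zero hf)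
    simp only [innerSL_apply_apply, real_inner_smul_left, real_inner_self_eq_norm_sq, hwb,
      zero_apply] at h0
    nlinarith
  obtain ⟨c, hc0, hc⟩ := exists_nonneg_smul_of_isMaxOn_closedBall hf hmax hwz hR
  have hk : w - nearestPt M w = (c / 2) • (w - z) := by
    rw [div_eq_inv_mul, mul_smul, ← hc, inv_smul_smul₀ two_ne_zero]
  have hm : infDist w M = c / 2 * R := by
    rw [← hwb, hk, norm_smul, Real.norm_of_nonneg (by positivity), ← dist_eq_norm, hwz]
  rw [hk, hm, mul_div_cancel_right₀ _ hR.ne']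
  exact ⟨hwz, rfl⟩

variable [ProperSpace E] {τ : ℝ}

-- A maximiser `w` of the distance to `M` on `closedBall (a + t • n) R` lies, by Fermat's rule,
-- on the sphere with `w - π w` a positive multiple of `w - (a + t • n)`; the distance bounds then
-- force `π w = a` and `w = a + (t + R) • n`.
lemma infDist_add_smul_add_eq (hM : IsCompact M)
    (hu : UniqueNearestPointsWithin M τ) {a n : E} {t R : ℝ}
    (ha : a ∈ M) (hn : ‖n‖ = 1) (ht : infDist (a + t • n) M = t) (hR : 0 < R) (hRt : R ≤ t)
    (htR : t + R < τ) : infDist (a + (t + R) • n) M = t + R := by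
  have hne : M.Nonempty := ⟨a, ha⟩
  set z := a + t • n
  obtain ⟨w, hw, hmax⟩ := (isCompact_closedBall z R).exists_isMaxOn
    (f := fun y => infDist y M ^ 2) (nonempty_closedBall.2 hR.le)
    ((continuous_infDist_pt M).pow 2).continuousOn
  set m := infDist w M
  have htm : t ≤ m := by
    have : infDist z M ^ 2 ≤ m ^ 2 := hmax (mem_closedBall_self hR.le)
    rw [ht] at this
    exact (pow_le_pow_iff_left₀ (by linarith) infDist_nonneg two_ne_zero).1 this
  have hmt : m ≤ t + R := by
    linarith [infDist_le_infDist_add_dist (x := w) (y := z) (s := M), mem_closedBall.1 hw]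
  obtain ⟨hwz, hwb⟩ := sub_nearestPt_eq_smul_of_isMaxOn_closedBall hM hne hR
    (hu w (by linarith)) (by linarith) hw hmax
  set b := nearestPt M w
  have hzb : z - b = (m / R - 1) • (w - z) := by rw [sub_smul, one_smul, ← hwb]; abel
  have hdzb : dist z b = |m - R| := by
    have : (m / R - 1) * R = m - R := by field_simp
    rw [dist_eq_norm, hzb, norm_smul, Real.norm_eq_abs, ← dist_eq_norm, hwz, ← this, abs_mul,
      abs_of_pos hR]
  have hm : m = t + R := by
    have := ht ▸ hdzb ▸ infDist_le_dist_of_mem (x := z) (hM.nearestPt_mem hne w)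
    cases abs_cases (m - R) <;> linarith
  have hza : z - a = t • n := by simp [z]
  have hba : b = a := by
    refine hu z (by linarith) ⟨hM.nearestPt_mem hne w, ?_⟩ ⟨ha, ?_⟩
    · rw [hdzb, ht, hm, add_sub_cancel_right, abs_of_pos (by linarith)]
    · rw [ht, dist_eq_norm, hza, norm_smul, hn, mul_one, Real.norm_of_nonneg (by linarith)]
  have ht0 : 0 < t := hR.trans_le hRt
  have hwz' : w - z = R • n := by
    have h1 : (t / R) • (w - z) = t • n := by
      rw [← hza, ← hba, hzb, hm, add_div, div_self hR.ne', add_sub_cancel_right]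
    rw [← inv_smul_smul₀ (div_pos ht0 hR).ne' (w - z), h1, smul_smul, inv_div,
      div_mul_cancel₀ _ ht0.ne']
  have hwa : w = a + (t + R) • n := by
    calc w = z + (w - z) := (add_sub_cancel z w).symm
      _ = a + (t + R) • n := by rw [hwz', add_smul, add_assoc]
  rw [← hwa]
  exact hm

lemma infDist_add_smul_of_le (hM : IsCompact M)
    (hu : UniqueNearestPointsWithin M τ) {a n : E} {s t : ℝ}
    (ha : a ∈ M) (hn : ‖n‖ = 1) (hs : 0 < s) (hs' : infDist (a + s • n) M = s) (hst : s ≤ t)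
    (htτ : t < τ) : infDist (a + t • n) M = t := by
  have hcont : Continuous fun r : ℝ => infDist (a + r • n) M := by fun_prop
  refine IsClosed.mem_of_ge_of_forall_exists_gt (s := {r | infDist (a + r • n) M = r})
    ((isClosed_eq hcont continuous_id).inter isClosed_Icc) hs' hst ?_
  rintro r ⟨hr, hsr, hrt⟩
  have hR : 0 < min r (t - r) := lt_min (by linarith) (by linarith)
  refine ⟨r + min r (t - r), infDist_add_smul_add_eq hM hu ha hn hr hR (min_le_left _ _)
    (by linarith [min_le_right r (t - r)]), by linarith, by linarith [min_le_right r (t - r)]⟩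

lemma two_mul_inner_sub_nearestPt_le (hM : IsCompact M)
    (hu : UniqueNearestPointsWithin M τ) {x b : E}
    (hx : infDist x M < τ) (hb : b ∈ M) :
    2 * τ * ⟪x - nearestPt M x, b - nearestPt M x⟫ ≤ infDist x M * ‖b - nearestPt M x‖ ^ 2 := by
  have hne : M.Nonempty := ⟨b, hb⟩
  set a := nearestPt M x
  set s := infDist x M
  have ha : a ∈ M := hM.nearestPt_mem hne x
  have hxa : ‖x - a‖ = s := by rw [← dist_eq_norm, hM.dist_nearestPt hne]
  rcases (infDist_nonneg : 0 ≤ s).eq_or_lt with hs | hs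
  · rw [norm_eq_zero.1 (hxa.trans hs.symm), inner_zero_left, mul_zero]
    positivity
  set n := s⁻¹ • (x - a)
  have hn : ‖n‖ = 1 := by
    rw [norm_smul, hxa, norm_inv, Real.norm_of_nonneg hs.le, inv_mul_cancel₀ hs.ne']
  have hxa' : x - a = s • n := (smul_inv_smul₀ hs.ne' _).symm
  -- each `a + t • n` with `s ≤ t < τ` is at distance `t` from `M`, hence at least `t` from `b`
  have hray : ∀ t, s ≤ t → t < τ → 2 * t * ⟪n, b - a⟫ ≤ ‖b - a‖ ^ 2 := by
    intro t hst htτ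
    have hd := infDist_add_smul_of_le hM hu ha hn hs (by rw [← hxa', add_sub_cancel]) hst htτ
    have hdb : t ≤ ‖t • n - (b - a)‖ :=
      calc t = infDist (a + t • n) M := hd.symm
        _ ≤ dist (a + t • n) b := infDist_le_dist_of_mem hb
        _ = ‖t • n - (b - a)‖ := by rw [dist_eq_norm]; congr 1; abel
    have := pow_le_pow_left₀ (hs.le.trans hst) hdb 2
    rw [norm_sub_sq_real, norm_smul, hn, real_inner_smul_left,
      Real.norm_of_nonneg (hs.le.trans hst)] at this
    linarith
  have hlim : Tendsto (fun t => 2 * t * ⟪n, b - a⟫) (𝓝[<] τ) (𝓝 (2 * τ * ⟪n, b - a⟫)) :=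
    (Continuous.tendsto (by fun_prop) τ).mono_left nhdsWithin_le_nhds
  have hτ : 2 * τ * ⟪n, b - a⟫ ≤ ‖b - a‖ ^ 2 :=
    le_of_tendsto hlim (eventually_of_mem (Ioo_mem_nhdsLT hx) fun t ht => hray t ht.1.le ht.2)
  calc 2 * τ * ⟪x - a, b - a⟫ = s * (2 * τ * ⟪n, b - a⟫) := by
        rw [hxa', real_inner_smul_left]; ring
    _ ≤ s * ‖b - a‖ ^ 2 := mul_le_mul_of_nonneg_left hτ hs.le

lemma lipschitzOnWith_nearestPt (hM : IsCompact M) (hne : M.Nonempty)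
    (hu : UniqueNearestPointsWithin M τ) {r : ℝ} (hr : r < τ) :
    LipschitzOnWith (τ / (τ - r)).toNNReal (nearestPt M) {x | infDist x M ≤ r} := by
  refine LipschitzOnWith.of_dist_le_mul
    fun x (hx : infDist x M ≤ r) y (hy : infDist y M ≤ r) => ?_
  set a := nearestPt M x
  set b := nearestPt M y
  have hτ : 0 < τ := infDist_nonneg.trans_lt (hx.trans_lt hr)
  have ka := two_mul_inner_sub_nearestPt_le hM hu (hx.trans_lt hr) (hM.nearestPt_mem hne y)
  have kb := two_mul_inner_sub_nearestPt_le hM hu (hy.trans_lt hr) (hM.nearestPt_mem hne x)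
  have hdecomp : ‖a - b‖ ^ 2 = ⟪x - y, a - b⟫ + ⟪x - a, b - a⟫ + ⟪y - b, a - b⟫ := by
    rw [← real_inner_self_eq_norm_sq, show b - a = -(a - b) by abel, inner_neg_right,
      show a - b = (x - y) - (x - a) + (y - b) by abel]
    simp only [inner_add_left, inner_sub_left]
    ring
  have hcs := real_inner_le_norm (x - y) (a - b)
  rw [norm_sub_rev b a] at ka
  have hsq : (τ - r) * ‖a - b‖ ^ 2 ≤ τ * ‖x - y‖ * ‖a - b‖ := by
    nlinarith [mul_le_mul_of_nonneg_right hx (sq_nonneg ‖a - b‖),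
      mul_le_mul_of_nonneg_right hy (sq_nonneg ‖a - b‖)]
  rw [Real.coe_toNNReal _ (div_pos hτ (by linarith)).le, dist_eq_norm, dist_eq_norm,
    div_mul_eq_mul_div, le_div_iff₀ (by linarith)]
  rcases (norm_nonneg (a - b)).eq_or_lt with h0 | h0
  · rw [← h0, zero_mul]; positivity
  · nlinarith

end Reach

lemma infDist_lineMap_le {E : Type*} [NormedAddCommGroup E] [NormedSpace ℝ E] {M : Set E}
    {p q : E} (hp : p ∈ M) (hq : q ∈ M) {t : ℝ} (ht : t ∈ Icc (0 : ℝ) 1) :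
    infDist (AffineMap.lineMap p q t) M ≤ dist p q / 2 := by
  rcases le_total t (1 / 2) with h | h
  · calc infDist (AffineMap.lineMap p q t) M ≤ dist (AffineMap.lineMap p q t) p :=
          infDist_le_dist_of_mem hp
      _ = t * dist p q := by rw [dist_lineMap_left, Real.norm_of_nonneg ht.1]
      _ ≤ dist p q / 2 := by nlinarith [dist_nonneg (x := p) (y := q)]
  · calc infDist (AffineMap.lineMap p q t) M ≤ dist (AffineMap.lineMap p q t) q :=
          infDist_le_dist_of_mem hq
      _ = (1 - t) * dist p q := by
        rw [dist_lineMap_right, Real.norm_of_nonneg (by linarith [ht.2])]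
      _ ≤ dist p q / 2 := by nlinarith [dist_nonneg (x := p) (y := q)]

section Geodesic

variable {D : ℕ} {M : Set (Euc D)} {x y : Euc D}

lemma edist_le_geodesicDist (M : Set (Euc D)) (x y : Euc D) : edist x y ≤ geodesicDist M x y :=
  le_iInf fun γ => le_iInf fun _ => le_iInf fun _ => le_iInf fun h0 => le_iInf fun h1 =>
    h0 ▸ h1 ▸ eVariationOn.edist_le γ (left_mem_Icc.2 zero_le_one) (right_mem_Icc.2 zero_le_one)

lemma geodesicDist_le_of_lipschitzOnWith {γ : ℝ → Euc D} {K : ℝ≥0}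
    (hγ : LipschitzOnWith K γ (Icc 0 1)) (hγM : MapsTo γ (Icc 0 1) M) (h0 : γ 0 = x)
    (h1 : γ 1 = y) : geodesicDist M x y ≤ K := by
  refine (iInf₂_le γ hγ.continuousOn).trans <| (iInf₂_le hγM h0).trans <| (iInf_le _ h1).trans ?_
  calc eVariationOn γ (Icc 0 1) = eVariationOn (γ ∘ id) (Icc 0 1) := rfl
    _ ≤ K * eVariationOn id (Icc 0 1) := hγ.comp_eVariationOn_le (mapsTo_id _)
    _ = K := by simp [eVariationOn_id_Icc]

lemma uniqueNearestPointsWithin_of_le_reach {τ : ℝ} (h : ENNReal.ofReal τ ≤ reach M) :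
    UniqueNearestPointsWithin M τ := by
  intro z hz b hb c hc
  by_contra hbc
  have hτ : ENNReal.ofReal τ ≤ ENNReal.ofReal (infDist z M) := by
    rw [infDist, ENNReal.ofReal_toReal (infEDist_ne_top ⟨b, hb.1⟩)]
    exact h.trans (iInf₂_le z ⟨b, hb.1, c, hc.1, hbc, hb.2, hc.2⟩)
  rcases ENNReal.ofReal_le_ofReal_iff'.1 hτ with h' | h' <;>
    linarith [infDist_nonneg (x := z) (s := M)]

lemma geodesicDist_le_of_dist_lt_two_mul {τ : ℝ} (hM : IsCompact M)
    (hu : UniqueNearestPointsWithin M τ) (hx : x ∈ M) (hy : y ∈ M)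
    (hxy : dist x y / 2 < τ) :
    geodesicDist M x y ≤ ENNReal.ofReal (τ / (τ - dist x y / 2) * dist x y) := by
  have hτ : 0 < τ - dist x y / 2 := by linarith
  have hγ := (lipschitzOnWith_nearestPt hM ⟨x, hx⟩ hu hxy).comp
    (lipschitzWith_lineMap x y).lipschitzOnWith fun t ht => infDist_lineMap_le hx hy ht
  refine (geodesicDist_le_of_lipschitzOnWith hγ (fun t _ => hM.nearestPt_mem ⟨x, hx⟩ _)
    (by simp [nearestPt_eq_self hx]) (by simp [nearestPt_eq_self hy])).trans_eq ?_
  rw [ENNReal.ofReal_mul (div_pos (by linarith [dist_nonneg (x := x) (y := y)]) hτ).le,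
    ENNReal.coe_mul, ← edist_nndist, edist_dist]
  rfl

end Geodesic

theorem stmt_1_general {D : ℕ} (M : Set (Euc D))
    (hcomp : IsCompact M)
    (τmin : ℝ) (hτ : 0 < τmin) (hreach : ENNReal.ofReal τmin ≤ reach M)
    (p q : Euc D) (hp : p ∈ M) (hq : q ∈ M) (hpq : ‖p - q‖ ≤ τmin) :
    ENNReal.ofReal ‖p - q‖ ≤ geodesicDist M p q ∧
      geodesicDist M p q ≤ ENNReal.ofReal (2 * ‖p - q‖) := by
  rw [← dist_eq_norm] at hpq ⊢
  refine ⟨by simpa [edist_dist] using edist_le_geodesicDist M p q, ?_⟩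
  refine (geodesicDist_le_of_dist_lt_two_mul hcomp
    (uniqueNearestPointsWithin_of_le_reach hreach) hp hq (by linarith)).trans
    (ENNReal.ofReal_le_ofReal (mul_le_mul_of_nonneg_right ?_ dist_nonneg))
  rw [div_le_iff₀ (by linarith)]
  linarith

theorem stmt_1 {D d : ℕ} (M : Set (Euc D)) (hM : IsC2SubmanifoldWithBoundary d M)
    (hcomp : IsCompact M) (hconn : IsConnected M)
    (τmin : ℝ) (hτ : 0 < τmin) (hreach : ENNReal.ofReal τmin ≤ reach M)
    (p q : Euc D) (hp : p ∈ M) (hq : q ∈ M) (hpq : ‖p - q‖ ≤ τmin) :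
    ENNReal.ofReal ‖p - q‖ ≤ geodesicDist M p q ∧
      geodesicDist M p q ≤ ENNReal.ofReal (2 * ‖p - q‖) :=
  stmt_1_general M hcomp τmin hτ hreach p q hp hq hpq
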